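/- (Backward error bound for the approximate Sherman–Morrison–Woodbury formula.) Let A be an invertible n×n real matrix, let U, V be n×k real matrices, set λ = ‖U‖·‖V‖ and B = A + UVᵀ, and assume ‖I + Vᵀ A⁻¹ U‖ ≤ β. Let X be an invertible n×n matrix with ‖X − A⁻¹‖ ≤ ε₁ where ε₁ < 1/(2‖A‖); assume I + Vᵀ X U is invertible; and let W be an invertible k×k matrix with ‖W − (I + Vᵀ X U)⁻¹‖ ≤ ε₂ such that W⁻¹ − Vᵀ X U is invertible, ε₂ < 1/(2(β + λ ε₁)), and 2(β + λ ε₁)² ε₂ < 1/2. Then the matrix X − X U W Vᵀ X is invertible and ‖B − (X − X U W Vᵀ X)⁻¹‖ ≤ 2 ε₁ ‖A‖² + 4 λ ε₂ (β + λ ε₁)². -/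

import Mathlib

/-!
The Woodbury identity, read backwards, gives the approximate inverse exactly:
`(X - X U W Vᵀ X)⁻¹ = X⁻¹ + U C Vᵀ` with `C = (W⁻¹ - Vᵀ X U)⁻¹`. Hence
`B - (X - X U W Vᵀ X)⁻¹ = (A - X⁻¹) + U (1 - C) Vᵀ`, and both terms are controlled by the
Neumann-series estimate `‖P⁻¹ - Q‖ ≤ 2 ε ‖Q‖²` whenever `‖P - Q⁻¹‖ ≤ ε` and `‖Q‖ ε ≤ 1/2`:
once for `(P, Q) = (X, A)`, and once for `(P, Q) = (W, 1 + Vᵀ X U)`, which makes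
`C = (1 + (W⁻¹ - (1 + Vᵀ X U)))⁻¹` a small perturbation of the identity.
-/

open Matrix
open scoped Matrix.Norms.L2Operator

namespace Matrix

section Inverse

variable {n k α : Type*} [Fintype n] [DecidableEq n] [Fintype k] [DecidableEq k] [CommRing α]

theorem isUnit_sub_mul_mul_mul_mul_and_inv_eq {X : Matrix n n α} {W : Matrix k k α}
    (U : Matrix n k α) (V : Matrix k n α) (hX : IsUnit X) (hW : IsUnit W)
    (hWX : IsUnit (W⁻¹ - V * X * U)) :
    IsUnit (X - X * U * W * V * X) ∧
      (X - X * U * W * V * X)⁻¹ = X⁻¹ + U * (W⁻¹ - V * X * U)⁻¹ * V := by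
  set C := (W⁻¹ - V * X * U)⁻¹
  have hXX : X * X⁻¹ = 1 := X.mul_nonsing_inv ((isUnit_iff_isUnit_det X).1 hX)
  have hWW : W * W⁻¹ = 1 := W.mul_nonsing_inv ((isUnit_iff_isUnit_det W).1 hW)
  have hC : C = W + W * (V * X * U) * C := by
    have : (W⁻¹ - V * X * U) * C = 1 := mul_nonsing_inv _ ((isUnit_iff_isUnit_det _).1 hWX)
    calc C = W * W⁻¹ * C := by rw [hWW, Matrix.one_mul]
      _ = W * ((W⁻¹ - V * X * U) * C) + W * (V * X * U) * C := by noncomm_ring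
      _ = W + W * (V * X * U) * C := by rw [this, Matrix.mul_one]
  have hMN : (X - X * U * W * V * X) * (X⁻¹ + U * C * V) = 1 := calc
    (X - X * U * W * V * X) * (X⁻¹ + U * C * V)
      = 1 + X * U * (C - (W + W * (V * X * U) * C)) * V := by
        simp only [Matrix.sub_mul, Matrix.mul_add, Matrix.mul_sub, Matrix.add_mul,
          Matrix.mul_assoc, hXX, Matrix.mul_one]
        abel
    _ = 1 := by rw [← hC, sub_self, Matrix.mul_zero, Matrix.zero_mul, add_zero]
  exact ⟨(isUnit_iff_isUnit_det _).2 (isUnit_det_of_right_inverse hMN), inv_eq_right_inv hMN⟩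

theorem inv_one_add_eq_one_sub_mul {D : Matrix n n α} (hD : IsUnit (1 + D)) :
    (1 + D)⁻¹ = 1 - D * (1 + D)⁻¹ := by
  rw [eq_sub_iff_add_eq, ← one_add_mul]
  exact mul_nonsing_inv _ ((isUnit_iff_isUnit_det _).1 hD)

end Inverse

section L2OpNorm

variable {𝕜 : Type*} [RCLike 𝕜] {l m n p : Type*} [Fintype l] [Fintype m] [Fintype n]
  [Fintype p] [DecidableEq m] [DecidableEq n] [DecidableEq p]

theorem l2_opNorm_mul_mul_le (A : Matrix l m 𝕜) (B : Matrix m n 𝕜) (C : Matrix n p 𝕜) :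
    ‖A * B * C‖ ≤ ‖A‖ * ‖B‖ * ‖C‖ :=
  (l2_opNorm_mul _ _).trans <| by gcongr; exact l2_opNorm_mul _ _

theorem l2_opNorm_add_mul_mul_le (S : Matrix l p 𝕜) (V : Matrix l m 𝕜) (X Y : Matrix m n 𝕜)
    (U : Matrix n p 𝕜) : ‖S + V * X * U‖ ≤ ‖S + V * Y * U‖ + ‖V‖ * ‖X - Y‖ * ‖U‖ := calc
  ‖S + V * X * U‖ = ‖(S + V * Y * U) + V * (X - Y) * U‖ := by
    rw [Matrix.mul_sub, Matrix.sub_mul, add_add_sub_cancel]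
  _ ≤ ‖S + V * Y * U‖ + ‖V‖ * ‖X - Y‖ * ‖U‖ :=
    (norm_add_le _ _).trans (by gcongr; exact l2_opNorm_mul_mul_le _ _ _)

theorem l2_opNorm_add_mul_sub_add_mul_mul_le (A A' : Matrix l p 𝕜) (U : Matrix l n 𝕜)
    (C : Matrix n n 𝕜) (V : Matrix n p 𝕜) :
    ‖(A + U * V) - (A' + U * C * V)‖ ≤ ‖A' - A‖ + ‖U‖ * ‖1 - C‖ * ‖V‖ := calc
  ‖(A + U * V) - (A' + U * C * V)‖ = ‖-(A' - A) + U * (1 - C) * V‖ := by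
    rw [Matrix.mul_sub, Matrix.sub_mul, Matrix.mul_one]
    abel_nf
  _ ≤ ‖A' - A‖ + ‖U‖ * ‖1 - C‖ * ‖V‖ :=
    (norm_add_le _ _).trans (by rw [norm_neg]; gcongr; exact l2_opNorm_mul_mul_le _ _ _)

theorem l2_opNorm_transpose (A : Matrix m n ℝ) : ‖Aᵀ‖ = ‖A‖ := by
  rw [← conjTranspose_eq_transpose_of_trivial, l2_opNorm_conjTranspose]

theorem l2_opNorm_one_le : ‖(1 : Matrix m m 𝕜)‖ ≤ 1 := by
  rw [← l2_opNorm_toEuclideanCLM, map_one]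
  exact ContinuousLinearMap.norm_id_le

theorem l2_opNorm_inv_one_add_le_two {D : Matrix m m 𝕜} (hD : IsUnit (1 + D))
    (hD' : ‖D‖ ≤ 1 / 2) : ‖(1 + D)⁻¹‖ ≤ 2 := by
  have h : ‖(1 + D)⁻¹‖ ≤ 1 + ‖D‖ * ‖(1 + D)⁻¹‖ := calc
    ‖(1 + D)⁻¹‖ = ‖1 - D * (1 + D)⁻¹‖ := by rw [← inv_one_add_eq_one_sub_mul hD]
    _ ≤ ‖(1 : Matrix m m 𝕜)‖ + ‖D‖ * ‖(1 + D)⁻¹‖ :=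
      (norm_sub_le _ _).trans (by gcongr; exact l2_opNorm_mul _ _)
    _ ≤ 1 + ‖D‖ * ‖(1 + D)⁻¹‖ := by gcongr; exact l2_opNorm_one_le
  nlinarith [norm_nonneg (1 + D)⁻¹]

theorem l2_opNorm_one_sub_inv_one_add_le {D : Matrix m m 𝕜} (hD : IsUnit (1 + D))
    (hD' : ‖D‖ ≤ 1 / 2) : ‖1 - (1 + D)⁻¹‖ ≤ 2 * ‖D‖ := calc
  ‖1 - (1 + D)⁻¹‖ = ‖D * (1 + D)⁻¹‖ := by
    conv_lhs => rw [inv_one_add_eq_one_sub_mul hD, sub_sub_cancel]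
  _ ≤ ‖D‖ * 2 := (l2_opNorm_mul _ _).trans (by gcongr; exact l2_opNorm_inv_one_add_le_two hD hD')
  _ = 2 * ‖D‖ := mul_comm _ _

theorem l2_opNorm_inv_sub_le {P Q : Matrix m m 𝕜} {ε : ℝ} (hP : IsUnit P) (hQ : IsUnit Q)
    (hPQ : ‖P - Q⁻¹‖ ≤ ε) (hε : ‖Q‖ * ε ≤ 1 / 2) : ‖P⁻¹ - Q‖ ≤ 2 * ε * ‖Q‖ ^ 2 := by
  have hQQ : Q * Q⁻¹ = 1 := Q.mul_nonsing_inv ((isUnit_iff_isUnit_det Q).1 hQ)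
  have hQQ' : Q⁻¹ * Q = 1 := Q.nonsing_inv_mul ((isUnit_iff_isUnit_det Q).1 hQ)
  have hPP : P⁻¹ * P = 1 := P.nonsing_inv_mul ((isUnit_iff_isUnit_det P).1 hP)
  have hQP : 1 + Q * (P - Q⁻¹) = Q * P := by rw [Matrix.mul_sub, hQQ, add_sub_cancel]
  have hPinv : ‖P⁻¹‖ ≤ 2 * ‖Q‖ := calc
    ‖P⁻¹‖ = ‖(1 + Q * (P - Q⁻¹))⁻¹ * Q‖ := by
      rw [hQP, Matrix.mul_inv_rev, Matrix.mul_assoc, hQQ', Matrix.mul_one]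
    _ ≤ 2 * ‖Q‖ := by
      have hD : ‖Q * (P - Q⁻¹)‖ ≤ 1 / 2 :=
        (l2_opNorm_mul _ _).trans ((mul_le_mul_of_nonneg_left hPQ (norm_nonneg _)).trans hε)
      refine (l2_opNorm_mul _ _).trans ?_
      gcongr
      exact l2_opNorm_inv_one_add_le_two (hQP ▸ hQ.mul hP) hD
  calc ‖P⁻¹ - Q‖ = ‖P⁻¹ * (Q⁻¹ - P) * Q‖ := by
        rw [Matrix.mul_sub, Matrix.sub_mul, Matrix.mul_assoc, hQQ', hPP, Matrix.mul_one,
          Matrix.one_mul]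
    _ ≤ 2 * ‖Q‖ * ε * ‖Q‖ := by
        refine (l2_opNorm_mul_mul_le _ _ _).trans ?_
        gcongr
        rwa [norm_sub_rev]
    _ = 2 * ε * ‖Q‖ ^ 2 := by ring

end L2OpNorm

end Matrix

theorem mul_lt_one_div_two_of_lt_one_div_two_mul {a ε : ℝ} (ha : 0 ≤ a) (h : ε < 1 / (2 * a)) :
    a * ε < 1 / 2 := by
  rcases ha.eq_or_lt with rfl | ha
  · norm_num
  · rw [lt_div_iff₀ (by positivity)] at h
    linarith

/-- Backward error bound for the approximate Sherman–Morrison–Woodbury formula. -/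
theorem smw_backward_error {n k : ℕ} (A : Matrix (Fin n) (Fin n) ℝ) (hA : IsUnit A)
    (U V : Matrix (Fin n) (Fin k) ℝ) (lam : ℝ) (hlam : lam = ‖U‖ * ‖V‖)
    (B : Matrix (Fin n) (Fin n) ℝ) (hB : B = A + U * Vᵀ)
    (β : ℝ) (hβ : ‖(1 : Matrix (Fin k) (Fin k) ℝ) + Vᵀ * A⁻¹ * U‖ ≤ β)
    (X : Matrix (Fin n) (Fin n) ℝ) (hX : IsUnit X) (ε₁ ε₂ : ℝ)
    (hXA : ‖X - A⁻¹‖ ≤ ε₁) (hε₁ : ε₁ < 1 / (2 * ‖A‖))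
    (hcapX : IsUnit ((1 : Matrix (Fin k) (Fin k) ℝ) + Vᵀ * X * U))
    (W : Matrix (Fin k) (Fin k) ℝ) (hW : IsUnit W)
    (hWcap : ‖W - ((1 : Matrix (Fin k) (Fin k) ℝ) + Vᵀ * X * U)⁻¹‖ ≤ ε₂)
    (hWinv : IsUnit (W⁻¹ - Vᵀ * X * U))
    (hε₂ : ε₂ < 1 / (2 * (β + lam * ε₁)))
    (hε₂' : 2 * (β + lam * ε₁) ^ 2 * ε₂ < 1 / 2) :
    IsUnit (X - X * U * W * Vᵀ * X) ∧
      ‖B - (X - X * U * W * Vᵀ * X)⁻¹‖ ≤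
        2 * ε₁ * ‖A‖ ^ 2 + 4 * lam * ε₂ * (β + lam * ε₁) ^ 2 := by
  set Z := (1 : Matrix (Fin k) (Fin k) ℝ) + Vᵀ * X * U
  set μ := β + lam * ε₁
  have hε₁0 : 0 ≤ ε₁ := (norm_nonneg _).trans hXA
  have hε₂0 : 0 ≤ ε₂ := (norm_nonneg _).trans hWcap
  have hμ : 0 ≤ μ := add_nonneg ((norm_nonneg _).trans hβ) (by rw [hlam]; positivity)
  have hZ : ‖Z‖ ≤ μ := by
    have hZ' := l2_opNorm_add_mul_mul_le 1 Vᵀ X A⁻¹ U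
    have : ‖V‖ * ‖X - A⁻¹‖ * ‖U‖ ≤ ‖V‖ * ε₁ * ‖U‖ := by gcongr
    rw [l2_opNorm_transpose] at hZ'
    simp only [μ, hlam]
    linarith
  have hXinv : ‖X⁻¹ - A‖ ≤ 2 * ε₁ * ‖A‖ ^ 2 := l2_opNorm_inv_sub_le hX hA hXA
    (mul_lt_one_div_two_of_lt_one_div_two_mul (norm_nonneg A) hε₁).le
  have hWinvZ : ‖W⁻¹ - Z‖ ≤ 2 * ε₂ * μ ^ 2 := by
    refine (l2_opNorm_inv_sub_le hW hcapX hWcap ?_).trans (by gcongr)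
    exact (mul_le_mul_of_nonneg_right hZ hε₂0).trans
      (mul_lt_one_div_two_of_lt_one_div_two_mul hμ hε₂).le
  have hC : ‖1 - (W⁻¹ - Vᵀ * X * U)⁻¹‖ ≤ 4 * ε₂ * μ ^ 2 := by
    have hWZ : W⁻¹ - Vᵀ * X * U = 1 + (W⁻¹ - Z) := by simp only [Z]; abel
    rw [hWZ] at hWinv ⊢
    linarith [l2_opNorm_one_sub_inv_one_add_le hWinv (by linarith)]
  obtain ⟨hM, hMinv⟩ := isUnit_sub_mul_mul_mul_mul_and_inv_eq U Vᵀ hX hW hWinv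
  refine ⟨hM, ?_⟩
  calc ‖B - (X - X * U * W * Vᵀ * X)⁻¹‖
      ≤ ‖X⁻¹ - A‖ + ‖U‖ * ‖1 - (W⁻¹ - Vᵀ * X * U)⁻¹‖ * ‖V‖ := by
        rw [hB, hMinv, ← l2_opNorm_transpose V]
        exact l2_opNorm_add_mul_sub_add_mul_mul_le _ _ _ _ _
    _ ≤ 2 * ε₁ * ‖A‖ ^ 2 + ‖U‖ * (4 * ε₂ * μ ^ 2) * ‖V‖ := by gcongr
    _ = 2 * ε₁ * ‖A‖ ^ 2 + 4 * lam * ε₂ * μ ^ 2 := by rw [hlam]; ring
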